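/- Let G be a POMDP with absorbing target set T, positive costs, and Supp(λ0) ∈ BeliefWin(G,T). For every k ∈ ℕ, the strategy σ*_k satisfies E^{σ*_k}_{λ0}[Total] ≤ E^{σ*_k}_{λ0}[Total_k] + α_k · U_Allow, where α_k = P^{σ*_k}_{λ0}(T is not reached within the first k steps). -/

import Mathlib

open Finset Filter
open scoped Classical

set_option linter.unusedSectionVars false

noncomputable section

/-- A finite history of a play: the current state together with the
(reversed) list of past steps; an entry `(a, s')` means: the action `a`
was taken from the state `s'` (leading to the next recorded state). -/
abbrev Hist (S A : Type) := S × List (A × S)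

/-- The observation–action sequence of a history. -/
def obsHist {S A Z : Type} (O : S → Z) (h : Hist S A) : Z × List (A × Z) :=
  (O h.1, h.2.map fun p => (p.1, O p.2))

/-- An observation-based (randomized, history-dependent) strategy. -/
structure Strategy (S A Z : Type) [Fintype A] (O : S → Z) where
  act : Hist S A → A → ℝ
  act_nonneg : ∀ h a, 0 ≤ act h a
  act_sum : ∀ h, ∑ a, act h a = 1
  obsBased : ∀ h h', obsHist O h = obsHist O h' → act h = act h'

/-- A partially observable Markov decision process. -/
structure POMDP (S A Z : Type) [Fintype S] [Fintype A] [Fintype Z] where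
  δ : S → A → S → ℝ
  δ_nonneg : ∀ s a s', 0 ≤ δ s a s'
  δ_sum : ∀ s a, ∑ s', δ s a s' = 1
  obs : S → Z
  init : S → ℝ
  init_nonneg : ∀ s, 0 ≤ init s
  init_sum : ∑ s, init s = 1
  init_obs : ∀ s s', 0 < init s → 0 < init s' → obs s = obs s'

namespace POMDP

variable {S A Z : Type} [Fintype S] [Fintype A] [Fintype Z]

/-- The target set `T` consists of absorbing states. -/
def Absorbing (M : POMDP S A Z) (T : Set S) : Prop :=
  ∀ t ∈ T, ∀ a, M.δ t a t = 1

/-- Probability that after `n` steps the process has followed exactly the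
history `(s, l)` (so `l` has length `n`). -/
def hprobAux (M : POMDP S A Z) (σ : Strategy S A Z M.obs) : ℕ → S → List (A × S) → ℝ
  | 0, s, l => if l = [] then M.init s else 0
  | n+1, s, l =>
    match l with
    | [] => 0
    | (a, s') :: rest => hprobAux M σ n s' rest * σ.act (s', rest) a * M.δ s' a s

def hprob (M : POMDP S A Z) (σ : Strategy S A Z M.obs) (n : ℕ) (h : Hist S A) : ℝ :=
  M.hprobAux σ n h.1 h.2

/-- The state sequence of a history visits the set `T`. -/
def visitsT (T : Set S) (h : Hist S A) : Prop :=
  h.1 ∈ T ∨ ∃ p ∈ h.2, p.2 ∈ T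

/-- Probability of reaching `T` within the first `n` steps. -/
def probReachBy (M : POMDP S A Z) (T : Set S) (σ : Strategy S A Z M.obs) (n : ℕ) : ℝ :=
  ∑' h : Hist S A, if visitsT T h then M.hprob σ n h else 0

/-- Probability of the reachability objective `Reach(T)`. -/
def probReach (M : POMDP S A Z) (T : Set S) (σ : Strategy S A Z M.obs) : ℝ :=
  ⨆ n, M.probReachBy T σ n

/-- The strategy `σ` is almost-sure winning for `Reach(T)`. -/
def AlmostSure (M : POMDP S A Z) (T : Set S) (σ : Strategy S A Z M.obs) : Prop :=
  M.probReach T σ = 1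

/-- Accumulated cost along a history. -/
def totalCostAux (c : S → A → ℝ) : S → List (A × S) → ℝ
  | _, [] => 0
  | _, (a, s') :: rest => totalCostAux c s' rest + c s' a

def totalCostH (c : S → A → ℝ) (h : Hist S A) : ℝ := totalCostAux c h.1 h.2

/-- Expected total cost of the first `n` steps, i.e. `E[Total_{n-1}]`
(in particular `E[Total_k] = expTotalSteps M c σ (k+1)`). -/
def expTotalSteps (M : POMDP S A Z) (c : S → A → ℝ) (σ : Strategy S A Z M.obs) (n : ℕ) : ℝ :=
  ∑' h : Hist S A, M.hprob σ n h * totalCostH c h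

/-- The value `Val(σ) = E[Total]` of a strategy, as the limit (limsup) of the
expected costs of the finite prefixes. -/
def Val (M : POMDP S A Z) (c : S → A → ℝ) (σ : Strategy S A Z M.obs) : EReal :=
  Filter.limsup (fun n => ((M.expTotalSteps c σ n : ℝ) : EReal)) Filter.atTop

/-- `optCost`: the infimum of the values of almost-sure winning strategies. -/
def optCost (M : POMDP S A Z) (T : Set S) (c : S → A → ℝ) : EReal :=
  ⨅ σ : {σ : Strategy S A Z M.obs // M.AlmostSure T σ}, M.Val c σ.1

end POMDP

namespace POMDP

variable {S A Z : Type} [Fintype S] [Fintype A] [Fintype Z]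

/-- Uniform distribution over a finite set of states. -/
def uniformS (U : Finset S) : S → ℝ := fun s => if s ∈ U then ((U.card : ℝ))⁻¹ else 0

lemma uniformS_nonneg (U : Finset S) (s : S) : 0 ≤ uniformS U s := by
  unfold uniformS; split_ifs <;> positivity

lemma uniformS_sum (U : Finset S) (h : U.Nonempty) : ∑ s, uniformS U s = 1 := by
  unfold uniformS
  rw [Finset.sum_ite_mem, Finset.univ_inter, Finset.sum_const, nsmul_eq_mul,
    mul_inv_cancel₀]
  exact_mod_cast Finset.card_ne_zero.mpr h

lemma uniformS_mem {U : Finset S} {s : S} (h : 0 < uniformS U s) : s ∈ U := by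
  by_contra hc; simp [uniformS, hc] at h

/-- The POMDP `M` with the initial distribution replaced by the uniform
distribution over `U`. -/
def reinit (M : POMDP S A Z) (U : Finset S) (hU : U.Nonempty)
    (hobs : ∀ s ∈ U, ∀ s' ∈ U, M.obs s = M.obs s') : POMDP S A Z :=
  { M with
    init := uniformS U
    init_nonneg := uniformS_nonneg U
    init_sum := uniformS_sum U hU
    init_obs := fun s s' hs hs' => hobs s (uniformS_mem hs) s' (uniformS_mem hs') }

/-- The POMDP `M` with the initial distribution replaced by the Dirac
distribution at `s0`. -/
def resetDirac (M : POMDP S A Z) (s0 : S) : POMDP S A Z :=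
  { M with
    init := fun s => if s = s0 then 1 else 0
    init_nonneg := by intro s; split_ifs <;> norm_num
    init_sum := by simp
    init_obs := by
      intro s s' hs hs'
      have h1 : s = s0 := by by_contra hc; simp [hc] at hs
      have h2 : s' = s0 := by by_contra hc; simp [hc] at hs'
      rw [h1, h2] }

/-- The set of almost-sure winning belief-supports: those `U` from which
(with the uniform initial distribution on `U`) some strategy wins
`Reach(T)` almost-surely. -/
def BeliefWin (M : POMDP S A Z) (T : Set S) : Set (Finset S) :=
  {U | ∃ (hU : U.Nonempty) (hobs : ∀ s ∈ U, ∀ s' ∈ U, M.obs s = M.obs s'),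
      ∃ σ : Strategy S A Z M.obs, (M.reinit U hU hobs).AlmostSure T σ}

/-- Belief-support update. -/
def updateF (M : POMDP S A Z) (U : Finset S) (z : Z) (a : A) : Finset S :=
  univ.filter (fun t => M.obs t = z ∧ ∃ s ∈ U, 0 < M.δ s a t)

/-- Allowed actions at a belief-support `U`. -/
def AllowSet (M : POMDP S A Z) (T : Set S) (U : Finset S) : Set A :=
  {a | ∀ z, (M.updateF U z a).Nonempty → M.updateF U z a ∈ M.BeliefWin T}

def allowFin (M : POMDP S A Z) (T : Set S) (U : Finset S) : Finset A :=
  univ.filter (· ∈ M.AllowSet T U)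

/-- The support of the initial distribution, as a belief-support. -/
def suppInitF (M : POMDP S A Z) : Finset S := univ.filter (fun s => 0 < M.init s)

/-- Belief-support after a history, starting from the initial belief-support `U0`. -/
def beliefOfFromAux (M : POMDP S A Z) (U0 : Finset S) : S → List (A × S) → Finset S
  | s, [] => U0.filter (fun t => M.obs t = M.obs s)
  | s, (a, s') :: rest => M.updateF (M.beliefOfFromAux U0 s' rest) (M.obs s) a

def beliefOfFrom (M : POMDP S A Z) (U0 : Finset S) (h : Hist S A) : Finset S :=
  M.beliefOfFromAux U0 h.1 h.2

/-- Belief-support after a history (with the initial belief-support being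
the support of the initial distribution). -/
def beliefOf (M : POMDP S A Z) (h : Hist S A) : Finset S :=
  M.beliefOfFrom M.suppInitF h

lemma beliefOfFromAux_obs (M : POMDP S A Z) (U0 : Finset S) :
    ∀ (l l' : List (A × S)) (s s' : S),
      l.map (fun p => (p.1, M.obs p.2)) = l'.map (fun p => (p.1, M.obs p.2)) →
      M.obs s = M.obs s' →
      M.beliefOfFromAux U0 s l = M.beliefOfFromAux U0 s' l'
  | [], [], s, s', _, hs => by simp [beliefOfFromAux, hs]
  | [], (_ :: _), _, _, hmap, _ => by simp at hmap
  | (_ :: _), [], _, _, hmap, _ => by simp at hmap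
  | ((a, t) :: r), ((a', t') :: r'), s, s', hmap, hs => by
      simp only [List.map_cons, List.cons.injEq, Prod.mk.injEq] at hmap
      obtain ⟨⟨ha, ht⟩, hr⟩ := hmap
      simp only [beliefOfFromAux]
      rw [M.beliefOfFromAux_obs U0 r r' t t' hr ht, hs, ha]

/-- Uniform distribution over a finite set of actions. -/
def uniformA (F : Finset A) : A → ℝ := fun a => if a ∈ F then ((F.card : ℝ))⁻¹ else 0

lemma uniformA_nonneg (F : Finset A) (a : A) : 0 ≤ uniformA F a := by
  unfold uniformA; split_ifs <;> positivity

lemma uniformA_sum (F : Finset A) (h : F.Nonempty) : ∑ a, uniformA F a = 1 := by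
  unfold uniformA
  rw [Finset.sum_ite_mem, Finset.univ_inter, Finset.sum_const, nsmul_eq_mul,
    mul_inv_cancel₀]
  exact_mod_cast Finset.card_ne_zero.mpr h

/-- The action distribution of `σ_Allow` (with initial belief-support `U0`):
uniform over the allowed actions of the current belief-support (with a
uniform fallback where no action is allowed). -/
def actAllowFrom (M : POMDP S A Z) (T : Set S) (U0 : Finset S) (h : Hist S A) : A → ℝ :=
  if (M.allowFin T (M.beliefOfFrom U0 h)).Nonempty
  then uniformA (M.allowFin T (M.beliefOfFrom U0 h))
  else uniformA (univ : Finset A)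

/-- The belief-support based strategy `σ_Allow` (tracking beliefs from `U0`). -/
def stratAllowFrom [Nonempty A] (M : POMDP S A Z) (T : Set S) (U0 : Finset S) :
    Strategy S A Z M.obs where
  act := M.actAllowFrom T U0
  act_nonneg := by
    intro h a; unfold actAllowFrom; split_ifs <;> exact uniformA_nonneg _ _
  act_sum := by
    intro h; unfold actAllowFrom; split_ifs with hne
    · exact uniformA_sum _ hne
    · exact uniformA_sum _ univ_nonempty
  obsBased := by
    intro h h' hobs
    have : M.beliefOfFrom U0 h = M.beliefOfFrom U0 h' := by
      unfold beliefOfFrom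
      exact M.beliefOfFromAux_obs U0 h.2 h'.2 h.1 h'.1
        (congrArg Prod.snd hobs) (congrArg Prod.fst hobs)
    unfold actAllowFrom
    rw [this]

/-- `σ_Allow`. -/
def stratAllow [Nonempty A] (M : POMDP S A Z) (T : Set S) : Strategy S A Z M.obs :=
  M.stratAllowFrom T M.suppInitF

/-- `T_Allow(s, U)`: the expected total cost of `σ_Allow` started in the
state `s` with the initial belief-support `U`. -/
def TAllow [Nonempty A] (M : POMDP S A Z) (T : Set S) (c : S → A → ℝ) (s : S) (U : Finset S) :
    EReal :=
  (M.resetDirac s).Val c (M.stratAllowFrom T U)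

/-- `U_Allow`: the maximal expected total cost of `σ_Allow` over all
almost-sure winning belief-supports `U` and states `s ∈ U`. -/
def UAllow [Nonempty A] (M : POMDP S A Z) (T : Set S) (c : S → A → ℝ) : EReal :=
  ⨆ U ∈ M.BeliefWin T, ⨆ s ∈ U, M.TAllow T c s U

end POMDP

namespace POMDP

variable {S A Z : Type} [Fintype S] [Fintype A] [Fintype Z]

/-- Normalization of a nonnegative function into a distribution. -/
def normalize (f : S → ℝ) : S → ℝ := fun t => f t / ∑ u, f u

/-- Support of an information state. -/
def suppF (b : S → ℝ) : Finset S := univ.filter (fun s => b s ≠ 0)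

/-- The information state (posterior distribution) after a history. -/
def infoOfAux (M : POMDP S A Z) : S → List (A × S) → S → ℝ
  | s, [] => normalize (fun t => if M.obs t = M.obs s then M.init t else 0)
  | s, (a, s') :: rest =>
      normalize (fun t => if M.obs t = M.obs s then ∑ u, M.infoOfAux s' rest u * M.δ u a t else 0)

def infoOf (M : POMDP S A Z) (h : Hist S A) : S → ℝ := M.infoOfAux h.1 h.2

lemma infoOfAux_obs (M : POMDP S A Z) :
    ∀ (l l' : List (A × S)) (s s' : S),
      l.map (fun p => (p.1, M.obs p.2)) = l'.map (fun p => (p.1, M.obs p.2)) →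
      M.obs s = M.obs s' →
      M.infoOfAux s l = M.infoOfAux s' l'
  | [], [], s, s', _, hs => by simp [infoOfAux, hs]
  | [], (_ :: _), _, _, hmap, _ => by simp at hmap
  | (_ :: _), [], _, _, hmap, _ => by simp at hmap
  | ((a, t) :: r), ((a', t') :: r'), s, s', hmap, hs => by
      simp only [List.map_cons, List.cons.injEq, Prod.mk.injEq] at hmap
      obtain ⟨⟨ha, ht⟩, hr⟩ := hmap
      simp only [infoOfAux]
      rw [M.infoOfAux_obs r r' t t' hr ht, hs, ha]

/-- Expected one-step cost `c'(b,a)` at an information state. -/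
def cinfo (c : S → A → ℝ) (b : S → ℝ) (a : A) : ℝ := ∑ s, b s * c s a

/-- Probability of observing `z` after playing `a` at information state `b`. -/
def obsProb (M : POMDP S A Z) (b : S → ℝ) (a : A) (z : Z) : ℝ :=
  ∑ t, if M.obs t = z then ∑ u, b u * M.δ u a t else 0

/-- Bayesian update of the information state `b` under action `a` and
observation `z`. -/
def postInfo (M : POMDP S A Z) (b : S → ℝ) (a : A) (z : Z) : S → ℝ :=
  normalize (fun t => if M.obs t = z then ∑ u, b u * M.δ u a t else 0)

/-- The allowed-action-restricted finite-horizon value iteration `V*_n`. -/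
def Vstar (M : POMDP S A Z) (T : Set S) (c : S → A → ℝ) : ℕ → (S → ℝ) → ℝ
  | 0, _ => 0
  | n+1, b =>
    if h : (M.allowFin T (suppF b)).Nonempty then
      (M.allowFin T (suppF b)).inf' h
        (fun a => cinfo c b a + ∑ z, M.obsProb b a z * M.Vstar T c n (M.postInfo b a z))
    else 0

/-- An allowed action attaining the minimum of the value iteration with
`n` steps remaining at information state `b`. -/
def foAct [Nonempty A] (M : POMDP S A Z) (T : Set S) (c : S → A → ℝ) : ℕ → (S → ℝ) → A
  | 0, _ => Classical.arbitrary A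
  | n+1, b =>
    if h : (M.allowFin T (suppF b)).Nonempty then
      Classical.choose (Finset.exists_mem_eq_inf' h
        (fun a => cinfo c b a + ∑ z, M.obsProb b a z * M.Vstar T c n (M.postInfo b a z)))
    else Classical.arbitrary A

/-- The action distribution of the finite-horizon optimal strategy `σFO_k`. -/
def actFO [Nonempty A] (M : POMDP S A Z) (T : Set S) (c : S → A → ℝ) (k : ℕ) (h : Hist S A) :
    A → ℝ :=
  fun a => if a = M.foAct T c (k - h.2.length) (M.infoOf h) then 1 else 0

lemma length_eq_of_obsHist {h h' : Hist S A} {O : S → Z} (he : obsHist O h = obsHist O h') :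
    h.2.length = h'.2.length := by
  have := congrArg (fun x => (Prod.snd x).length) he
  simpa [obsHist] using this

/-- The (allowed-action-restricted) finite-horizon optimal strategy `σFO_k`. -/
def stratFO [Nonempty A] (M : POMDP S A Z) (T : Set S) (c : S → A → ℝ) (k : ℕ) :
    Strategy S A Z M.obs where
  act := M.actFO T c k
  act_nonneg := by intro h a; unfold actFO; split_ifs <;> norm_num
  act_sum := by intro h; unfold actFO; simp
  obsBased := by
    intro h h' hobs
    have hlen : h.2.length = h'.2.length := length_eq_of_obsHist hobs
    have hinfo : M.infoOf h = M.infoOf h' := by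
      unfold infoOf
      exact M.infoOfAux_obs h.2 h'.2 h.1 h'.1
        (congrArg Prod.snd hobs) (congrArg Prod.fst hobs)
    unfold actFO
    rw [hlen, hinfo]

/-- The strategy `σ*_k`: play `σFO_k` for the first `k` steps, then `σ_Allow`. -/
def stratStar [Nonempty A] (M : POMDP S A Z) (T : Set S) (c : S → A → ℝ) (k : ℕ) :
    Strategy S A Z M.obs where
  act := fun h =>
    if h.2.length < k then M.actFO T c k h else M.actAllowFrom T M.suppInitF h
  act_nonneg := by
    intro h a; split_ifs with hl
    · exact (M.stratFO T c k).act_nonneg h a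
    · exact (M.stratAllowFrom T M.suppInitF).act_nonneg h a
  act_sum := by
    intro h; split_ifs with hl
    · exact (M.stratFO T c k).act_sum h
    · exact (M.stratAllowFrom T M.suppInitF).act_sum h
  obsBased := by
    intro h h' hobs
    have hlen : h.2.length = h'.2.length := length_eq_of_obsHist hobs
    rw [hlen]
    split_ifs with hl
    · exact (M.stratFO T c k).obsBased h h' hobs
    · exact (M.stratAllowFrom T M.suppInitF).obsBased h h' hobs

/-- `α_k`: the probability that `T` is not reached within the first `k`
steps when playing `σ*_k`. -/
def alphaK [Nonempty A] (M : POMDP S A Z) (T : Set S) (c : S → A → ℝ) (k : ℕ) : ℝ :=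
  1 - M.probReachBy T (M.stratStar T c k) k

end POMDP

/-!
Split the play at time `k`. The first `k` steps cost at most `E[Total_k]`. After a history `g`
of length `k`, `σ*_k` continues as `σ_Allow` started in the current state with the current
belief-support. Since `T` is absorbing and free, continuations from `T` cost nothing; the others
cost at most `U_Allow`, because the belief-support after `g` contains the current state and is
almost-sure winning. The latter holds since `σ*_k` only plays allowed actions, and a winning
belief-support has an allowed action: the first action of a winning strategy, as almost-sure
winning passes to the continuation after every history of positive probability. The histories
of length `k` that are not in `T` carry mass `α_k`.
-/

theorem EReal.coe_sum_mul_le {ι : Type*} {s : Finset ι} {w x : ι → ℝ} {B : EReal}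
    (hw : ∀ i ∈ s, 0 ≤ w i) (hx : ∀ i ∈ s, w i ≠ 0 → (x i : EReal) ≤ B) :
    ((∑ i ∈ s, w i * x i : ℝ) : EReal) ≤ ((∑ i ∈ s, w i : ℝ) : EReal) * B := by
  by_cases h0 : ∀ i ∈ s, w i = 0
  · rw [sum_eq_zero fun i hi => by rw [h0 i hi, zero_mul], sum_eq_zero h0]
    simp
  push Not at h0
  obtain ⟨i, hi, hwi⟩ := h0
  have hpos : 0 < ∑ i ∈ s, w i := sum_pos' hw ⟨i, hi, (hw i hi).lt_of_ne' hwi⟩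
  induction B using EReal.rec with
  | bot => exact absurd (hx i hi hwi) (not_le.2 (EReal.bot_lt_coe _))
  | top => rw [EReal.coe_mul_top_of_pos hpos]; exact le_top
  | coe b =>
    rw [← EReal.coe_mul, EReal.coe_le_coe_iff, sum_mul]
    refine sum_le_sum fun j hj => ?_
    rcases eq_or_ne (w j) 0 with h | h
    · simp [h]
    · exact mul_le_mul_of_nonneg_left (EReal.coe_le_coe_iff.1 (hx j hj h)) (hw j hj)

namespace Strategy

variable {S A Z : Type} [Fintype A] {O : S → Z}

@[ext]
theorem ext {σ τ : Strategy S A Z O} (h : σ.act = τ.act) : σ = τ := by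
  cases σ; cases τ; cases h; rfl

theorem exists_act_pos (σ : Strategy S A Z O) (h : Hist S A) : ∃ a, 0 < σ.act h a := by
  obtain ⟨a, -, ha⟩ := exists_ne_zero_of_sum_ne_zero ((σ.act_sum h).symm ▸ one_ne_zero)
  exact ⟨a, (σ.act_nonneg h a).lt_of_ne' ha⟩

/-- `σ.shift l` plays as `σ` does after the older steps `l` (histories list the newest step
first). -/
def shift (σ : Strategy S A Z O) (l : List (A × S)) : Strategy S A Z O where
  act h := σ.act (h.1, h.2 ++ l)
  act_nonneg h := σ.act_nonneg _
  act_sum h := σ.act_sum _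
  obsBased h h' hobs := σ.obsBased _ _ <| by
    simp only [obsHist, Prod.mk.injEq, List.map_append] at hobs ⊢
    exact ⟨hobs.1, by rw [hobs.2]⟩

end Strategy

/-- The oldest step comes last, so its state is the one the history starts from. -/
def firstState {S A : Type} (x : Hist S A) : S := x.2.foldl (fun _ p => p.2) x.1

def histsOfLength {S A : Type} [Fintype S] [Fintype A] : ℕ → Finset (Hist S A)
  | 0 => univ.image fun s => (s, [])
  | n + 1 => (univ ×ˢ histsOfLength n).image fun p : (A × S) × Hist S A =>
      (p.1.2, (p.1.1, p.2.1) :: p.2.2)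

section histsOfLength

variable {S A : Type} [Fintype S] [Fintype A]

theorem mem_histsOfLength : ∀ {n : ℕ} {x : Hist S A}, x ∈ histsOfLength n ↔ x.2.length = n
  | 0, (s, l) => by cases l <;> simp [histsOfLength]
  | n + 1, (t, l) => by
    cases l with
    | nil => simp [histsOfLength]
    | cons p l =>
      simp only [histsOfLength, mem_image, mem_product, mem_univ, true_and, Prod.exists,
        List.length_cons, add_left_inj]
      constructor
      · rintro ⟨a, s, s', l', hmem, h⟩
        simp only [Prod.mk.injEq, List.cons.injEq] at h
        obtain ⟨rfl, rfl, rfl⟩ := h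
        exact mem_histsOfLength.1 hmem
      · intro h
        exact ⟨p.1, t, p.2, l, mem_histsOfLength.2 h, rfl⟩

theorem sum_histsOfLength_zero {β : Type*} [AddCommMonoid β] (F : Hist S A → β) :
    ∑ x ∈ histsOfLength 0, F x = ∑ s, F (s, []) :=
  sum_image fun _ _ _ _ h => (Prod.mk.inj h).1

theorem sum_histsOfLength_succ {β : Type*} [AddCommMonoid β] (n : ℕ) (F : Hist S A → β) :
    ∑ x ∈ histsOfLength (n + 1), F x
      = ∑ y ∈ histsOfLength n, ∑ a, ∑ t, F (t, (a, y.1) :: y.2) := by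
  rw [histsOfLength, sum_image, sum_product, sum_comm]
  · simp only [← sum_product', univ_product_univ]
  · rintro ⟨⟨a, t⟩, s, l⟩ - ⟨⟨a', t'⟩, s', l'⟩ - h
    simp only [Prod.mk.injEq, List.cons.injEq] at h
    obtain ⟨rfl, ⟨rfl, rfl⟩, rfl⟩ := h
    rfl

end histsOfLength

namespace POMDP

variable {S A Z : Type} [Fintype S] [Fintype A] [Fintype Z] {M : POMDP S A Z}
  {σ : Strategy S A Z M.obs} {T : Set S} {c : S → A → ℝ}

section HistoryProbability

theorem hprob_succ_cons (σ : Strategy S A Z M.obs) (n : ℕ) (t s : S) (a : A) (l : List (A × S)) :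
    M.hprob σ (n + 1) (t, (a, s) :: l) = M.hprob σ n (s, l) * σ.act (s, l) a * M.δ s a t := rfl

theorem hprob_nonneg : ∀ (n : ℕ) (x : Hist S A), 0 ≤ M.hprob σ n x
  | 0, (s, []) => M.init_nonneg s
  | 0, (_, _ :: _) => le_rfl
  | _ + 1, (_, []) => le_rfl
  | n + 1, (t, (a, s) :: l) =>
    mul_nonneg (mul_nonneg (hprob_nonneg n (s, l)) (σ.act_nonneg _ a)) (M.δ_nonneg s a t)

theorem length_eq_of_hprob_ne_zero : ∀ {n : ℕ} {x : Hist S A}, M.hprob σ n x ≠ 0 → x.2.length = n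
  | 0, (_, []), _ => rfl
  | 0, (_, _ :: _), h => absurd rfl h
  | _ + 1, (_, []), h => absurd rfl h
  | n + 1, (t, (a, s) :: l), h => by
    rw [hprob_succ_cons] at h
    simp [length_eq_of_hprob_ne_zero (left_ne_zero_of_mul (left_ne_zero_of_mul h))]

theorem hprob_ne_zero_induction {P : Hist S A → Prop}
    (nil : ∀ s, M.init s ≠ 0 → P (s, []))
    (cons : ∀ n t s a l, M.hprob σ n (s, l) ≠ 0 → σ.act (s, l) a ≠ 0 → M.δ s a t ≠ 0 →
      P (s, l) → P (t, (a, s) :: l)) :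
    ∀ {n : ℕ} {x : Hist S A}, M.hprob σ n x ≠ 0 → P x
  | 0, (s, []), h => nil s h
  | 0, (_, _ :: _), h => absurd rfl h
  | _ + 1, (_, []), h => absurd rfl h
  | n + 1, (t, (a, s) :: l), h => by
    rw [hprob_succ_cons, mul_ne_zero_iff, mul_ne_zero_iff] at h
    exact cons n t s a l h.1.1 h.1.2 h.2 (hprob_ne_zero_induction nil cons h.1.1)

def histExpect (M : POMDP S A Z) (σ : Strategy S A Z M.obs) (n : ℕ) (C : Hist S A → ℝ) : ℝ :=
  ∑ x ∈ histsOfLength n, M.hprob σ n x * C x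

theorem tsum_hprob_mul (n : ℕ) (C : Hist S A → ℝ) :
    ∑' x, M.hprob σ n x * C x = M.histExpect σ n C :=
  tsum_eq_sum fun x hx => by
    rw [mem_histsOfLength] at hx
    rw [not_imp_comm.1 length_eq_of_hprob_ne_zero hx, zero_mul]

theorem histExpect_zero (σ : Strategy S A Z M.obs) (C : Hist S A → ℝ) :
    M.histExpect σ 0 C = ∑ s, M.init s * C (s, []) :=
  sum_histsOfLength_zero _

theorem histExpect_succ (σ : Strategy S A Z M.obs) (n : ℕ) (C : Hist S A → ℝ) :
    M.histExpect σ (n + 1) C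
      = M.histExpect σ n fun y => ∑ a, ∑ t, σ.act y a * M.δ y.1 a t * C (t, (a, y.1) :: y.2) := by
  simp only [histExpect, sum_histsOfLength_succ, mul_sum, hprob_succ_cons, mul_assoc]

theorem histExpect_congr {n : ℕ} {C D : Hist S A → ℝ}
    (h : ∀ x, M.hprob σ n x ≠ 0 → C x = D x) : M.histExpect σ n C = M.histExpect σ n D :=
  sum_congr rfl fun x _ => by
    by_cases hx : M.hprob σ n x = 0
    · simp [hx]
    · rw [h x hx]

theorem histExpect_mono {n : ℕ} {C D : Hist S A → ℝ} (h : ∀ x, C x ≤ D x) :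
    M.histExpect σ n C ≤ M.histExpect σ n D :=
  sum_le_sum fun x _ => mul_le_mul_of_nonneg_left (h x) (hprob_nonneg n x)

theorem histExpect_nonneg {n : ℕ} {C : Hist S A → ℝ} (h : ∀ x, 0 ≤ C x) :
    0 ≤ M.histExpect σ n C :=
  sum_nonneg fun x _ => mul_nonneg (hprob_nonneg n x) (h x)

theorem histExpect_add (n : ℕ) (C D : Hist S A → ℝ) :
    M.histExpect σ n (fun x => C x + D x) = M.histExpect σ n C + M.histExpect σ n D := by
  simp only [histExpect, mul_add, sum_add_distrib]

theorem histExpect_sub (n : ℕ) (C D : Hist S A → ℝ) :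
    M.histExpect σ n (fun x => C x - D x) = M.histExpect σ n C - M.histExpect σ n D := by
  simp only [histExpect, mul_sub, sum_sub_distrib]

theorem histExpect_const (σ : Strategy S A Z M.obs) (n : ℕ) (r : ℝ) :
    M.histExpect σ n (fun _ => r) = r := by
  induction n with
  | zero => simp [histExpect_zero, ← sum_mul, M.init_sum]
  | succ n ih =>
    have hstep (y : Hist S A) : ∑ a, ∑ t, σ.act y a * M.δ y.1 a t * r = r := by
      simp only [← sum_mul, ← mul_sum, M.δ_sum, mul_one, σ.act_sum, one_mul]
    simp only [histExpect_succ, hstep, ih]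

theorem tendsto_histExpect {ι : Type*} {l : Filter ι} {n : ℕ} {C : ι → Hist S A → ℝ}
    {D : Hist S A → ℝ} (h : ∀ x, Tendsto (fun i => C i x) l (nhds (D x))) :
    Tendsto (fun i => M.histExpect σ n (C i)) l (nhds (M.histExpect σ n D)) :=
  tendsto_finsetSum _ fun x _ => (h x).const_mul _

theorem eq_one_of_histExpect_eq_one {n : ℕ} {L : Hist S A → ℝ} (hL : ∀ x, L x ≤ 1)
    (h : M.histExpect σ n L = 1) {x : Hist S A} (hx : M.hprob σ n x ≠ 0) : L x = 1 := by
  have h0 : M.histExpect σ n (fun x => 1 - L x) = 0 := by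
    rw [histExpect_sub, histExpect_const, h, sub_self]
  have hmem : x ∈ histsOfLength n := mem_histsOfLength.2 (length_eq_of_hprob_ne_zero hx)
  have := (sum_eq_zero_iff_of_nonneg fun y _ =>
    mul_nonneg (hprob_nonneg n y) (sub_nonneg.2 (hL y))).1 h0 x hmem
  linarith [(mul_eq_zero.1 this).resolve_left hx]

theorem hprob_eq_sum_resetDirac (σ : Strategy S A Z M.obs) :
    ∀ (n : ℕ) (x : Hist S A), M.hprob σ n x = ∑ s, M.init s * (M.resetDirac s).hprob σ n x
  | 0, (s, []) => by simp [hprob, hprobAux, resetDirac]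
  | 0, (_, _ :: _) => by simp [hprob, hprobAux]
  | _ + 1, (_, []) => by simp [hprob, hprobAux]
  | n + 1, (t, (a, s) :: l) => by
    rw [hprob_succ_cons, hprob_eq_sum_resetDirac σ n (s, l), sum_mul, sum_mul]
    refine sum_congr rfl fun x _ => ?_
    change _ = M.init x * ((M.resetDirac x).hprob σ n (s, l) * σ.act (s, l) a * M.δ s a t)
    ring

theorem histExpect_eq_sum_resetDirac (σ : Strategy S A Z M.obs) (n : ℕ) (C : Hist S A → ℝ) :
    M.histExpect σ n C = ∑ s, M.init s * (M.resetDirac s).histExpect σ n C := by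
  simp only [histExpect, hprob_eq_sum_resetDirac σ n, mul_sum, sum_mul, mul_assoc]
  exact sum_comm

/-- The Markov property at time `k`. -/
theorem histExpect_add_steps (σ : Strategy S A Z M.obs) (k : ℕ) :
    ∀ (j : ℕ) (C : Hist S A → ℝ), M.histExpect σ (k + j) C
      = M.histExpect σ k fun g =>
          (M.resetDirac g.1).histExpect (σ.shift g.2) j fun p => C (p.1, p.2 ++ g.2)
  | 0, C => by
    refine congrArg _ (funext fun g => ?_)
    rw [histExpect_zero (M := M.resetDirac g.1) (σ.shift g.2)]
    simp [resetDirac]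
  | j + 1, C => by
    rw [← add_assoc, histExpect_succ, histExpect_add_steps σ k j]
    refine congrArg _ (funext fun g => ?_)
    rw [histExpect_succ (M := M.resetDirac g.1) (σ.shift g.2)]
    rfl

theorem init_firstState_ne_zero {n : ℕ} {x : Hist S A} (hx : M.hprob σ n x ≠ 0) :
    M.init (firstState x) ≠ 0 :=
  hprob_ne_zero_induction (P := fun x => M.init (firstState x) ≠ 0) (fun _ hs => hs)
    (fun _ _ _ _ _ _ _ _ ih => ih) hx

theorem firstState_eq_of_hprob_resetDirac_ne_zero {s : S} {n : ℕ} {x : Hist S A}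
    (hx : (M.resetDirac s).hprob σ n x ≠ 0) : firstState x = s := by
  simpa [resetDirac] using init_firstState_ne_zero hx

theorem hprob_congr {σ τ : Strategy S A Z M.obs}
    (h : ∀ y, M.init (firstState y) ≠ 0 → σ.act y = τ.act y) :
    ∀ (n : ℕ) (x : Hist S A), M.hprob σ n x = M.hprob τ n x
  | 0, _ => rfl
  | _ + 1, (_, []) => rfl
  | n + 1, (t, (a, s) :: l) => by
    rw [hprob_succ_cons, hprob_succ_cons, hprob_congr h n (s, l)]
    by_cases h0 : M.hprob τ n (s, l) = 0
    · simp [h0]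
    · rw [h (s, l) (init_firstState_ne_zero h0)]

theorem histExpect_resetDirac_congr_strategy {s : S} {σ τ : Strategy S A Z M.obs}
    (h : ∀ y, firstState y = s → σ.act y = τ.act y) (n : ℕ) (C : Hist S A → ℝ) :
    (M.resetDirac s).histExpect σ n C = (M.resetDirac s).histExpect τ n C := by
  simp only [histExpect, hprob_congr (M := M.resetDirac s) (σ := σ) (τ := τ)
    (fun y hy => h y (by simpa [resetDirac] using hy)) n]

end HistoryProbability

section Absorption

theorem Absorbing.eq_of_δ_ne_zero (habs : M.Absorbing T) {t t' : S} (ht : t ∈ T) {a : A}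
    (h : M.δ t a t' ≠ 0) : t' = t := by
  by_contra hne
  have hle : ∑ u ∈ {t, t'}, M.δ t a u ≤ ∑ u, M.δ t a u :=
    sum_le_sum_of_subset_of_nonneg (subset_univ _) fun u _ _ => M.δ_nonneg t a u
  rw [sum_pair (Ne.symm hne), M.δ_sum, habs t ht a] at hle
  exact h (le_antisymm (by linarith) (M.δ_nonneg t a t'))

theorem head_mem_of_visitsT (habs : M.Absorbing T) {n : ℕ} {x : Hist S A}
    (hx : M.hprob σ n x ≠ 0) : visitsT T x → x.1 ∈ T := by
  refine hprob_ne_zero_induction (P := fun x => visitsT T x → x.1 ∈ T) ?_ ?_ hx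
  · rintro s - (hs | ⟨_, hp, -⟩)
    exacts [hs, absurd hp List.not_mem_nil]
  · rintro n t s a l - - hδ ih (ht | ⟨p, hp, hpT⟩)
    · exact ht
    · have hs : s ∈ T := by
        rcases List.mem_cons.1 hp with rfl | hp
        exacts [hpT, ih (Or.inr ⟨p, hp, hpT⟩)]
      rwa [habs.eq_of_δ_ne_zero hs hδ]

theorem visitsT_of_firstState_mem : ∀ {x : Hist S A}, firstState x ∈ T → visitsT T x
  | (_, []), h => Or.inl h
  | (_, (a, s) :: l), h => by
    rcases visitsT_of_firstState_mem (x := (s, l)) h with hs | ⟨p, hp, hpT⟩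
    · exact Or.inr ⟨(a, s), List.mem_cons_self, hs⟩
    · exact Or.inr ⟨p, List.mem_cons_of_mem _ hp, hpT⟩

theorem totalCostH_eq_zero_of_firstState_mem (habs : M.Absorbing T)
    (hc0 : ∀ t ∈ T, ∀ a, c t a = 0) {n : ℕ} {x : Hist S A} (hx : M.hprob σ n x ≠ 0) :
    firstState x ∈ T → totalCostH c x = 0 := by
  refine hprob_ne_zero_induction (P := fun x => firstState x ∈ T → totalCostH c x = 0)
    (fun _ _ _ => rfl) ?_ hx
  intro n t s a l hsl _ _ ih hfirst
  have hs : s ∈ T := head_mem_of_visitsT habs hsl (visitsT_of_firstState_mem hfirst)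
  change totalCostH c (s, l) + c s a = 0
  rw [ih hfirst, hc0 s hs a, add_zero]

end Absorption

section Cost

theorem totalCostH_nonneg (hc : ∀ s a, 0 ≤ c s a) : ∀ x : Hist S A, 0 ≤ totalCostH c x
  | (_, []) => le_rfl
  | (_, (a, s) :: l) => add_nonneg (totalCostH_nonneg hc (s, l)) (hc s a)

theorem totalCostH_append {g : Hist S A} :
    ∀ {x : Hist S A}, firstState x = g.1 →
      totalCostH c (x.1, x.2 ++ g.2) = totalCostH c g + totalCostH c x
  | (_, []), rfl => (add_zero _).symm
  | (_, (a, s) :: l), h => by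
    change totalCostH c (s, l ++ g.2) + c s a = totalCostH c g + (totalCostH c (s, l) + c s a)
    rw [totalCostH_append (x := (s, l)) h, add_assoc]

theorem expTotalSteps_eq_histExpect (c : S → A → ℝ) (σ : Strategy S A Z M.obs) (n : ℕ) :
    M.expTotalSteps c σ n = M.histExpect σ n (totalCostH c) :=
  tsum_hprob_mul n _

theorem expTotalSteps_add_steps (c : S → A → ℝ) (σ : Strategy S A Z M.obs) (k j : ℕ) :
    M.expTotalSteps c σ (k + j) = M.expTotalSteps c σ k
      + M.histExpect σ k fun g => (M.resetDirac g.1).histExpect (σ.shift g.2) j (totalCostH c) := by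
  rw [expTotalSteps_eq_histExpect, expTotalSteps_eq_histExpect, histExpect_add_steps,
    ← histExpect_add]
  refine congrArg _ (funext fun g => ?_)
  rw [histExpect_congr (M := M.resetDirac g.1) (σ := σ.shift g.2)
      (D := fun p => totalCostH c g + totalCostH c p)
      fun p hp => totalCostH_append (firstState_eq_of_hprob_resetDirac_ne_zero hp),
    histExpect_add (M := M.resetDirac g.1) (σ := σ.shift g.2),
    histExpect_const (M := M.resetDirac g.1) (σ.shift g.2)]

theorem expTotalSteps_mono (hc : ∀ s a, 0 ≤ c s a) (σ : Strategy S A Z M.obs) :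
    Monotone (M.expTotalSteps c σ) :=
  monotone_nat_of_le_succ fun n => by
    rw [expTotalSteps_add_steps]
    exact le_add_of_nonneg_right
      (histExpect_nonneg fun _ => histExpect_nonneg (totalCostH_nonneg hc))

theorem coe_expTotalSteps_le_Val (hc : ∀ s a, 0 ≤ c s a) (n : ℕ) :
    (M.expTotalSteps c σ n : EReal) ≤ M.Val c σ :=
  le_limsup_of_frequently_le' <| Eventually.frequently <|
    (eventually_ge_atTop n).mono fun _ hm => EReal.coe_le_coe (expTotalSteps_mono hc σ hm)

end Cost

section Reachability

def probStateIn (M : POMDP S A Z) (T : Set S) (σ : Strategy S A Z M.obs) (n : ℕ) : ℝ :=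
  M.histExpect σ n fun x => if x.1 ∈ T then 1 else 0

theorem probReachBy_eq_probStateIn (habs : M.Absorbing T) (σ : Strategy S A Z M.obs) (n : ℕ) :
    M.probReachBy T σ n = M.probStateIn T σ n := by
  rw [probReachBy, probStateIn, ← tsum_hprob_mul]
  refine tsum_congr fun x => ?_
  by_cases hx : M.hprob σ n x = 0
  · simp [hx]
  · simp only [mul_ite, mul_one, mul_zero,
      propext ⟨head_mem_of_visitsT habs hx, fun h => Or.inl h⟩]

theorem one_sub_probReachBy (habs : M.Absorbing T) (σ : Strategy S A Z M.obs) (n : ℕ) :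
    1 - M.probReachBy T σ n = ∑ x ∈ (histsOfLength n).filter (·.1 ∉ T), M.hprob σ n x := by
  calc 1 - M.probReachBy T σ n
      = M.histExpect σ n (fun _ => 1) - M.histExpect σ n fun x => if x.1 ∈ T then 1 else 0 := by
        rw [histExpect_const, probReachBy_eq_probStateIn habs, probStateIn]
    _ = M.histExpect σ n fun x => if x.1 ∉ T then 1 else 0 := by
        rw [← histExpect_sub]
        congr 1
        ext x
        split_ifs <;> simp_all
    _ = _ := by simp [histExpect, sum_filter]

theorem probStateIn_le_one (n : ℕ) : M.probStateIn T σ n ≤ 1 :=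
  (histExpect_mono fun x => by split_ifs <;> norm_num).trans_eq (histExpect_const σ n 1)

/-- Once in `T`, the play stays in `T`. -/
theorem probStateIn_mono (habs : M.Absorbing T) (σ : Strategy S A Z M.obs) :
    Monotone (M.probStateIn T σ) := by
  refine monotone_nat_of_le_succ fun n => ?_
  rw [probStateIn, probStateIn, histExpect_succ]
  refine histExpect_mono fun y => ?_
  have hterm : ∀ a t, 0 ≤ σ.act y a * M.δ y.1 a t * if t ∈ T then (1 : ℝ) else 0 :=
    fun a t => mul_nonneg (mul_nonneg (σ.act_nonneg y a) (M.δ_nonneg _ a t)) (by positivity)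
  split_ifs with hy
  · calc (1 : ℝ) = ∑ a, σ.act y a * M.δ y.1 a y.1 * if y.1 ∈ T then 1 else 0 := by
          simp [habs y.1 hy, hy, σ.act_sum]
      _ ≤ _ := sum_le_sum fun a _ =>
          single_le_sum (f := fun t => σ.act y a * M.δ y.1 a t * if t ∈ T then 1 else 0)
            (fun t _ => hterm a t) (mem_univ y.1)
  · exact sum_nonneg fun a _ => sum_nonneg fun t _ => hterm a t

theorem tendsto_probStateIn_iSup (habs : M.Absorbing T) (σ : Strategy S A Z M.obs) :
    Tendsto (M.probStateIn T σ) atTop (nhds (⨆ n, M.probStateIn T σ n)) :=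
  tendsto_atTop_ciSup (probStateIn_mono habs σ) ⟨1, Set.forall_mem_range.2 probStateIn_le_one⟩

theorem almostSure_iff_tendsto (habs : M.Absorbing T) (σ : Strategy S A Z M.obs) :
    M.AlmostSure T σ ↔ Tendsto (M.probStateIn T σ) atTop (nhds 1) := by
  simp only [AlmostSure, probReach, probReachBy_eq_probStateIn habs]
  exact ⟨fun h => h ▸ tendsto_probStateIn_iSup habs σ,
    fun h => tendsto_nhds_unique (tendsto_probStateIn_iSup habs σ) h⟩

/-- A shortfall of the continuation after `g` would be a shortfall of the whole play. -/
theorem AlmostSure.resetDirac_shift (habs : M.Absorbing T) (hσ : M.AlmostSure T σ) {k : ℕ}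
    {g : Hist S A} (hg : M.hprob σ k g ≠ 0) :
    (M.resetDirac g.1).AlmostSure T (σ.shift g.2) := by
  set L : Hist S A → ℝ := fun x => ⨆ j, (M.resetDirac x.1).probStateIn T (σ.shift x.2) j
  have hlim : Tendsto (fun j => M.histExpect σ k fun x =>
      (M.resetDirac x.1).probStateIn T (σ.shift x.2) j) atTop (nhds (M.histExpect σ k L)) :=
    tendsto_histExpect fun x => tendsto_probStateIn_iSup (M := M.resetDirac x.1) habs _
  have hone : Tendsto (fun j => M.histExpect σ k fun x =>
      (M.resetDirac x.1).probStateIn T (σ.shift x.2) j) atTop (nhds 1) := by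
    have := (tendsto_add_atTop_iff_nat k).2 ((almostSure_iff_tendsto habs σ).1 hσ)
    simpa only [add_comm _ k, probStateIn, histExpect_add_steps σ k] using this
  have hL : L g = 1 :=
    eq_one_of_histExpect_eq_one (fun x => ciSup_le fun _ => probStateIn_le_one _)
      (tendsto_nhds_unique hlim hone) hg
  rw [almostSure_iff_tendsto (M := M.resetDirac g.1) habs (σ.shift g.2), ← hL]
  exact tendsto_probStateIn_iSup (M := M.resetDirac g.1) habs _

theorem almostSure_of_forall_resetDirac (habs : M.Absorbing T)
    (h : ∀ s, M.init s ≠ 0 → (M.resetDirac s).AlmostSure T σ) : M.AlmostSure T σ := by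
  have hsum : M.probStateIn T σ = fun n => ∑ s, M.init s * (M.resetDirac s).probStateIn T σ n :=
    funext fun n => histExpect_eq_sum_resetDirac σ n _
  rw [almostSure_iff_tendsto habs, ← M.init_sum, hsum]
  refine tendsto_finsetSum _ fun s _ => ?_
  by_cases hs : M.init s = 0
  · simp [hs]
  · simpa using
      ((almostSure_iff_tendsto (M := M.resetDirac s) habs σ).1 (h s hs)).const_mul (M.init s)

end Reachability

section BeliefSupport

theorem obs_eq_of_mem_updateF {U : Finset S} {z : Z} {a : A} {t : S} (ht : t ∈ M.updateF U z a) :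
    M.obs t = z :=
  (mem_filter.1 ht).2.1

/-- Any first action of a winning strategy is allowed: the strategy still wins after each of
its outcomes. -/
theorem allowFin_nonempty (habs : M.Absorbing T) {U : Finset S} (hU : U ∈ M.BeliefWin T) :
    (M.allowFin T U).Nonempty := by
  obtain ⟨hUne, hobs, σ, hσ⟩ := hU
  have ⟨s₀, hs₀⟩ := hUne
  obtain ⟨a, ha⟩ := σ.exists_act_pos (s₀, [])
  refine ⟨a, mem_filter.2 ⟨mem_univ a, fun z hz =>
    ⟨hz, fun t ht t' ht' => ?_, σ.shift [(a, s₀)], ?_⟩⟩⟩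
  · rw [obs_eq_of_mem_updateF ht, obs_eq_of_mem_updateF ht']
  refine almostSure_of_forall_resetDirac habs fun t ht => ?_
  obtain ⟨-, s, hs, hδ⟩ := (mem_filter.1 (uniformS_mem ((uniformS_nonneg _ t).lt_of_ne' ht))).2
  have hact : σ.act (s, []) = σ.act (s₀, []) := σ.obsBased _ _ (by simp [obsHist, hobs s hs s₀ hs₀])
  have hshift : σ.shift [(a, s)] = σ.shift [(a, s₀)] := Strategy.ext <| funext fun h =>
    σ.obsBased _ _ (by simp [obsHist, hobs s hs s₀ hs₀])
  rw [← hshift]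
  refine AlmostSure.resetDirac_shift (M := M.reinit U hUne hobs) habs hσ (k := 1)
    (g := (t, [(a, s)])) ?_
  change uniformS U s * σ.act (s, []) a * M.δ s a t ≠ 0
  have hu : 0 < uniformS U s := by
    rw [uniformS, if_pos hs]
    exact inv_pos.2 (Nat.cast_pos.2 (card_pos.2 hUne))
  rw [hact]
  exact (mul_pos (mul_pos hu ha) hδ).ne'

theorem normalize_nonneg {f : S → ℝ} (hf : ∀ t, 0 ≤ f t) (t : S) : 0 ≤ normalize f t :=
  div_nonneg (hf t) (sum_nonneg fun u _ => hf u)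

theorem suppF_normalize {f : S → ℝ} (hf : ∀ t, 0 ≤ f t) : suppF (normalize f) = suppF f := by
  ext t
  simp only [suppF, normalize, mem_filter, mem_univ, true_and, div_ne_zero_iff,
    and_iff_left_iff_imp]
  exact fun ht hsum => ht ((sum_eq_zero_iff_of_nonneg fun u _ => hf u).1 hsum t (mem_univ t))

theorem suppF_bayesUpdate {b : S → ℝ} (hb : ∀ u, 0 ≤ b u) (z : Z) (a : A) :
    suppF (fun t => if M.obs t = z then ∑ u, b u * M.δ u a t else 0)
      = M.updateF (suppF b) z a := by
  ext t
  simp only [suppF, updateF, mem_filter, mem_univ, true_and, ne_eq, ite_eq_right_iff,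
    not_forall, exists_prop,
    sum_eq_zero_iff_of_nonneg fun u _ => mul_nonneg (hb u) (M.δ_nonneg u a t), mul_eq_zero,
    not_or, (M.δ_nonneg _ a t).lt_iff_ne', ne_eq]

theorem infoOfAux_nonneg : ∀ (s : S) (l : List (A × S)) (t : S), 0 ≤ M.infoOfAux s l t
  | _, [], _ => normalize_nonneg (fun u => by split_ifs; exacts [M.init_nonneg u, le_rfl]) _
  | _, (a, s') :: l, _ => normalize_nonneg (fun u => by
      split_ifs
      exacts [sum_nonneg fun v _ => mul_nonneg (infoOfAux_nonneg s' l v) (M.δ_nonneg v a u),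
        le_rfl]) _

theorem suppF_infoOf : ∀ x : Hist S A, suppF (M.infoOf x) = M.beliefOf x
  | (s, []) => by
    rw [infoOf, infoOfAux, suppF_normalize fun u => by split_ifs; exacts [M.init_nonneg u, le_rfl]]
    ext t
    simp [suppF, beliefOf, beliefOfFrom, beliefOfFromAux, suppInitF,
      (M.init_nonneg t).lt_iff_ne', and_comm]
  | (s, (a, s') :: l) => by
    rw [infoOf, infoOfAux, suppF_normalize fun u => by
        split_ifs
        exacts [sum_nonneg fun v _ => mul_nonneg (infoOfAux_nonneg s' l v) (M.δ_nonneg v a u),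
          le_rfl],
      suppF_bayesUpdate (infoOfAux_nonneg s' l)]
    exact congrArg (M.updateF · (M.obs s) a) (suppF_infoOf (s', l))

theorem mem_beliefOf {n : ℕ} {x : Hist S A} (hx : M.hprob σ n x ≠ 0) : x.1 ∈ M.beliefOf x := by
  refine hprob_ne_zero_induction (P := fun x => x.1 ∈ M.beliefOf x) (fun s hs => ?_) ?_ hx
  · simp [beliefOf, beliefOfFrom, beliefOfFromAux, suppInitF, (M.init_nonneg s).lt_iff_ne', hs]
  · exact fun _ t s a l _ _ hδ ih =>
      mem_filter.2 ⟨mem_univ t, rfl, s, ih, (M.δ_nonneg s a t).lt_of_ne' hδ⟩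

theorem beliefOf_nil {s : S} (hs : M.init s ≠ 0) : M.beliefOf (s, []) = M.suppInitF :=
  filter_eq_self.2 fun t ht =>
    M.init_obs t s (mem_filter.1 ht).2 ((M.init_nonneg s).lt_of_ne' hs)

theorem obs_eq_of_mem_beliefOfFrom {U₀ : Finset S} :
    ∀ {x : Hist S A} {t : S}, t ∈ M.beliefOfFrom U₀ x → M.obs t = M.obs x.1
  | (_, []), _, ht => (mem_filter.1 ht).2
  | (_, _ :: _), _, ht => obs_eq_of_mem_updateF ht

theorem beliefOfFrom_append {U₀ : Finset S} {g : Hist S A} :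
    ∀ {x : Hist S A}, firstState x = g.1 →
      M.beliefOfFrom U₀ (x.1, x.2 ++ g.2) = M.beliefOfFrom (M.beliefOfFrom U₀ g) x
  | (_, []), rfl => (filter_eq_self.2 fun _ ht => obs_eq_of_mem_beliefOfFrom ht).symm
  | (t, (a, s) :: l), h => by
    change M.updateF (M.beliefOfFrom U₀ (s, l ++ g.2)) (M.obs t) a
      = M.updateF (M.beliefOfFrom (M.beliefOfFrom U₀ g) (s, l)) (M.obs t) a
    rw [beliefOfFrom_append (x := (s, l)) h]

end BeliefSupport

section StratStar

variable [Nonempty A] {k : ℕ}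

theorem foAct_mem {n : ℕ} {b : S → ℝ} (hne : (M.allowFin T (suppF b)).Nonempty) :
    M.foAct T c (n + 1) b ∈ M.allowFin T (suppF b) := by
  rw [foAct, dif_pos hne]
  exact (Classical.choose_spec (exists_mem_eq_inf' hne _)).1

theorem mem_allowFin_of_stratStar_act_ne_zero (habs : M.Absorbing T) {h : Hist S A}
    (hB : M.beliefOf h ∈ M.BeliefWin T) {a : A} (ha : (M.stratStar T c k).act h a ≠ 0) :
    a ∈ M.allowFin T (M.beliefOf h) := by
  have hne := allowFin_nonempty habs hB
  change (if h.2.length < k then M.actFO T c k h else M.actAllowFrom T M.suppInitF h) a ≠ 0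
    at ha
  split_ifs at ha with hk
  · obtain ⟨n, hn⟩ : ∃ n, k - h.2.length = n + 1 :=
      Nat.exists_eq_add_one.2 (Nat.sub_pos_of_lt hk)
    have hfo : a = M.foAct T c (n + 1) (M.infoOf h) := by
      by_contra hne'
      exact ha (by simp [actFO, hn, hne'])
    rw [hfo, ← suppF_infoOf]
    exact foAct_mem (by rwa [suppF_infoOf])
  · change (if (M.allowFin T (M.beliefOf h)).Nonempty then uniformA (M.allowFin T (M.beliefOf h))
      else uniformA univ) a ≠ 0 at ha
    rw [if_pos hne] at ha
    by_contra hna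
    exact ha (by simp [uniformA, hna])

/-- Along `σ*_k` only allowed actions are played, so the belief-support stays winning. -/
theorem beliefOf_mem_beliefWin (habs : M.Absorbing T) (hinit : M.suppInitF ∈ M.BeliefWin T)
    {n : ℕ} {x : Hist S A} (hx : M.hprob (M.stratStar T c k) n x ≠ 0) :
    M.beliefOf x ∈ M.BeliefWin T := by
  refine hprob_ne_zero_induction (P := fun x => M.beliefOf x ∈ M.BeliefWin T)
    (fun s hs => by rw [beliefOf_nil hs]; exact hinit) ?_ hx
  intro n t s a l hsl hact hδ ih
  have hx' : M.hprob (M.stratStar T c k) (n + 1) (t, (a, s) :: l) ≠ 0 := by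
    rw [hprob_succ_cons]
    exact mul_ne_zero (mul_ne_zero hsl hact) hδ
  have ht : t ∈ M.beliefOf (t, (a, s) :: l) := mem_beliefOf hx'
  exact (mem_filter.1 (mem_allowFin_of_stratStar_act_ne_zero habs ih hact)).2 (M.obs t) ⟨t, ht⟩

theorem stratStar_shift_act {g x : Hist S A} (hg : g.2.length = k) (hx : firstState x = g.1) :
    ((M.stratStar T c k).shift g.2).act x = (M.stratAllowFrom T (M.beliefOf g)).act x := by
  change (if (x.2 ++ g.2).length < k then M.actFO T c k (x.1, x.2 ++ g.2)
    else M.actAllowFrom T M.suppInitF (x.1, x.2 ++ g.2)) = M.actAllowFrom T (M.beliefOf g) x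
  rw [if_neg (by simp [hg])]
  simp only [actAllowFrom, beliefOfFrom_append hx]
  rfl

/-- After `k` steps, `σ*_k` continues as `σ_Allow`; continuations from `T` cost nothing. -/
theorem expTotalSteps_stratStar_add (habs : M.Absorbing T) (hc0 : ∀ t ∈ T, ∀ a, c t a = 0)
    (k j : ℕ) :
    M.expTotalSteps c (M.stratStar T c k) (k + j) = M.expTotalSteps c (M.stratStar T c k) k
      + ∑ g ∈ (histsOfLength k).filter (·.1 ∉ T), M.hprob (M.stratStar T c k) k g
          * (M.resetDirac g.1).expTotalSteps c (M.stratAllowFrom T (M.beliefOf g)) j := by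
  rw [expTotalSteps_add_steps, histExpect, sum_filter]
  refine congrArg _ (sum_congr rfl fun g hg => ?_)
  split_ifs with hgT
  · rw [histExpect_congr (M := M.resetDirac g.1) (σ := (M.stratStar T c k).shift g.2)
        (D := fun _ => 0) fun p hp => totalCostH_eq_zero_of_firstState_mem
          (M := M.resetDirac g.1) habs hc0 hp
          (by rwa [firstState_eq_of_hprob_resetDirac_ne_zero hp]),
      histExpect_const (M := M.resetDirac g.1) ((M.stratStar T c k).shift g.2), mul_zero]
  · rw [expTotalSteps_eq_histExpect (M := M.resetDirac g.1) c (M.stratAllowFrom T (M.beliefOf g)),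
      histExpect_resetDirac_congr_strategy
        (fun y hy => stratStar_shift_act (mem_histsOfLength.1 hg) hy)]

theorem coe_expTotalSteps_stratAllow_le_UAllow (habs : M.Absorbing T)
    (hc : ∀ s a, 0 ≤ c s a) (hinit : M.suppInitF ∈ M.BeliefWin T) {n : ℕ} {g : Hist S A}
    (hg : M.hprob (M.stratStar T c k) n g ≠ 0) (j : ℕ) :
    ((M.resetDirac g.1).expTotalSteps c (M.stratAllowFrom T (M.beliefOf g)) j : EReal)
      ≤ M.UAllow T c :=
  (coe_expTotalSteps_le_Val (M := M.resetDirac g.1) hc j).trans <|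
    le_iSup₂_of_le (f := fun U _ => ⨆ s ∈ U, M.TAllow T c s U) (M.beliefOf g)
      (beliefOf_mem_beliefWin habs hinit hg) <|
    le_iSup₂_of_le (f := fun s _ => M.TAllow T c s (M.beliefOf g)) g.1 (mem_beliefOf hg) le_rfl

end StratStar

end POMDP

/-- `E^{σ*_k}[Total] ≤ E^{σ*_k}[Total_k] + α_k · U_Allow`. -/
theorem val_stratStar_le
    {S A Z : Type} [Fintype S] [Fintype A] [Fintype Z] [Nonempty A]
    (M : POMDP S A Z) (T : Set S) (c : S → A → ℝ)
    (habs : M.Absorbing T)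
    (hc0 : ∀ t ∈ T, ∀ a, c t a = 0)
    (hc1 : ∀ s ∉ T, ∀ a, 1 ≤ c s a)
    (hinit : M.suppInitF ∈ M.BeliefWin T)
    (k : ℕ) :
    M.Val c (M.stratStar T c k) ≤
      ((M.expTotalSteps c (M.stratStar T c k) (k + 1) : ℝ) : EReal) +
        ((M.alphaK T c k : ℝ) : EReal) * M.UAllow T c := by
  have hc : ∀ s a, 0 ≤ c s a := fun s a => by
    by_cases hs : s ∈ T
    · exact (hc0 s hs a).ge
    · exact zero_le_one.trans (hc1 s hs a)
  have hmono := POMDP.expTotalSteps_mono hc (M.stratStar T c k)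
  refine limsup_le_of_le (by isBoundedDefault) (Eventually.of_forall fun n => ?_)
  rw [POMDP.alphaK, POMDP.one_sub_probReachBy habs]
  calc ((M.expTotalSteps c (M.stratStar T c k) n : ℝ) : EReal)
      ≤ (M.expTotalSteps c (M.stratStar T c k) (k + n) : ℝ) :=
        EReal.coe_le_coe (hmono (Nat.le_add_left n k))
    _ = _ := by rw [POMDP.expTotalSteps_stratStar_add habs hc0, EReal.coe_add]
    _ ≤ _ := add_le_add (EReal.coe_le_coe (hmono k.le_succ))
        (EReal.coe_sum_mul_le (fun g _ => POMDP.hprob_nonneg k g) fun _ _ hg =>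
          POMDP.coe_expTotalSteps_stratAllow_le_UAllow habs hc hinit hg n)
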